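/- In the exterior algebra of ℝ⁷, with δ₁,…,δ₇ as below and ψ₊ = e₁₃₅ − e₁₄₆ − e₂₃₆ − e₂₄₅, one has (δ₁∧e₃₅ − e₁∧δ₃∧e₅ + e₁∧e₃∧δ₅ − (δ₁∧e₄₆ − e₁∧δ₄∧e₆ + e₁∧e₄∧δ₆) − (δ₂∧e₃₆ − e₂∧δ₃∧e₆ + e₂∧e₃∧δ₆) − (δ₂∧e₄₅ − e₂∧δ₄∧e₅ + e₂∧e₄∧δ₅)) ∧ e₇ + ψ₊ ∧ δ₇ = 0. (The expression in parentheses is the Leibniz expansion of the Chevalley–Eilenberg differential dψ₊, so this is the identity d(ψ₊ ∧ e⁷) = 0, the second condition (SU3hypo) for the SU(3)-structure on M_β.) -/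
import Mathlib


noncomputable section

/-- The standard basis vectors of `ℝ⁷`, as degree-one elements of the exterior
algebra of `ℝ⁷` (0-indexed: `E 0 = e₁`, …, `E 6 = e₇`). -/
def E (i : Fin 7) : ExteriorAlgebra ℝ (Fin 7 → ℝ) :=
  ExteriorAlgebra.ι ℝ (Pi.single i 1)

/-- The fundamental form `ω = e₁₂ + e₃₄ + e₅₆`. -/
def ω : ExteriorAlgebra ℝ (Fin 7 → ℝ) := E 0 * E 1 + E 2 * E 3 + E 4 * E 5

/-- `ψ₊ = e₁₃₅ − e₁₄₆ − e₂₃₆ − e₂₄₅`. -/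
def ψp : ExteriorAlgebra ℝ (Fin 7 → ℝ) :=
  E 0 * E 2 * E 4 - E 0 * E 3 * E 5 - E 1 * E 2 * E 5 - E 1 * E 3 * E 4

/-- `ψ₋ = e₁₃₆ + e₁₄₅ + e₂₃₅ − e₂₄₆`. -/
def ψm : ExteriorAlgebra ℝ (Fin 7 → ℝ) :=
  E 0 * E 2 * E 5 + E 0 * E 3 * E 4 + E 1 * E 2 * E 4 - E 1 * E 3 * E 5

/-- The closed 3-form `H = −a·e₁₄₆` of Theorem 3.1. -/
def Hform (a : ℝ) : ExteriorAlgebra ℝ (Fin 7 → ℝ) := (-a) • (E 0 * E 3 * E 5)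

/-- `δ₁ = a·e₄₆`. -/
def δ₁ (a : ℝ) : ExteriorAlgebra ℝ (Fin 7 → ℝ) := a • (E 3 * E 5)
/-- `δ₂ = −(a/2)e₃₆ − (a/2)e₄₅ + (a/2)e₁₇`. -/
def δ₂ (a : ℝ) : ExteriorAlgebra ℝ (Fin 7 → ℝ) :=
  (-(a/2)) • (E 2 * E 5) + (-(a/2)) • (E 3 * E 4) + (a/2) • (E 0 * E 6)
/-- `δ₃ = −(a/2)e₁₅ + (a/2)e₂₆ − (a/2)e₄₇`. -/
def δ₃ (a : ℝ) : ExteriorAlgebra ℝ (Fin 7 → ℝ) :=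
  (-(a/2)) • (E 0 * E 4) + (a/2) • (E 1 * E 5) + (-(a/2)) • (E 3 * E 6)
/-- `δ₄ = −a·e₁₆`. -/
def δ₄ (a : ℝ) : ExteriorAlgebra ℝ (Fin 7 → ℝ) := (-a) • (E 0 * E 5)
/-- `δ₅ = (a/2)e₁₃ − (a/2)e₂₄ − (a/2)e₆₇`. -/
def δ₅ (a : ℝ) : ExteriorAlgebra ℝ (Fin 7 → ℝ) :=
  (a/2) • (E 0 * E 2) + (-(a/2)) • (E 1 * E 3) + (-(a/2)) • (E 5 * E 6)
/-- `δ₆ = a·e₁₄`. -/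
def δ₆ (a : ℝ) : ExteriorAlgebra ℝ (Fin 7 → ℝ) := a • (E 0 * E 3)
/-- `δ₇ = −(a/2)e₁₂ − (a/2)e₃₄ − (a/2)e₅₆`. -/
def δ₇ (a : ℝ) : ExteriorAlgebra ℝ (Fin 7 → ℝ) :=
  (-(a/2)) • (E 0 * E 1) + (-(a/2)) • (E 2 * E 3) + (-(a/2)) • (E 4 * E 5)


lemma Esq (i : Fin 7) : E i * E i = 0 := ExteriorAlgebra.ι_sq_zero _

lemma Esq' (i : Fin 7) (x : ExteriorAlgebra ℝ (Fin 7 → ℝ)) : E i * (E i * x) = 0 := by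
  rw [← mul_assoc, Esq, zero_mul]

lemma Eswap (i j : Fin 7) (_ : j < i) : E i * E j = -(E j * E i) := by
  unfold E
  exact eq_neg_of_add_eq_zero_left (ExteriorAlgebra.ι_add_mul_swap _ _)

lemma Eswap' (i j : Fin 7) (h : j < i) (x : ExteriorAlgebra ℝ (Fin 7 → ℝ)) :
    E i * (E j * x) = -(E j * (E i * x)) := by
  rw [← mul_assoc, Eswap i j h, ← mul_assoc, neg_mul]

/-- `d(ψ₊ ∧ e⁷) = 0`, the second condition (SU3hypo): the Leibniz
expansion of `dψ₊` wedged with `e₇`, plus `ψ₊ ∧ δ₇`, vanishes. -/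
theorem dpsip_wedge_e7 (a : ℝ) :
    (δ₁ a * (E 2 * E 4) - E 0 * δ₃ a * E 4 + E 0 * E 2 * δ₅ a -
      (δ₁ a * (E 3 * E 5) - E 0 * δ₄ a * E 5 + E 0 * E 3 * δ₆ a) -
      (δ₂ a * (E 2 * E 5) - E 1 * δ₃ a * E 5 + E 1 * E 2 * δ₆ a) -
      (δ₂ a * (E 3 * E 4) - E 1 * δ₄ a * E 4 + E 1 * E 3 * δ₅ a)) * E 6 +
    ψp * δ₇ a = 0 := by
  simp only [δ₁, δ₂, δ₃, δ₄, δ₅, δ₆, δ₇, ψp]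
  simp (config := { decide := true }) only [mul_add, add_mul, mul_sub, sub_mul, mul_neg, neg_mul,
    smul_mul_assoc, mul_smul_comm, mul_assoc, Eswap, Eswap', Esq, Esq',
    mul_zero, zero_mul, smul_zero, neg_zero, neg_neg, smul_neg]
  module
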